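/- The matrix Ψ is invertible and its inverse has the checkerboard sign pattern: for all indices i, j one has (−1)^{i+j} (Ψ^{-1})_{ij} > 0. Equivalently, every entry of the matrix σ* Ψ^{-1} σ* is positive. -/

import Mathlib

/-!
Ψ is the Cauchy matrix `1 / (x i + y j)` with `x = y = λ`. Clearing the last column with the last
row as pivot leaves the smaller Cauchy matrix, rescaled on rows by `(x n - x i) / (x i + y n)` and on
columns by `(y n - y j) / (x n + y j)`. So, by induction, a Cauchy matrix with increasing `x`, `y` and
positive `x i + y j` has positive determinant. Every minor of such a matrix is again one, so by the
adjugate formula `(-1) ^ (i + j) * Ψ⁻¹ i j` is a quotient of two positive determinants.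
-/

open Matrix

variable {K : Type*} [Field K]

def cauchyMatrix {m n : Type*} (x : m → K) (y : n → K) : Matrix m n K :=
  of fun i j => 1 / (x i + y j)

theorem cauchyMatrix_submatrix {m n m' n' : Type*} (x : m → K) (y : n → K)
    (f : m' → m) (g : n' → n) :
    (cauchyMatrix x y).submatrix f g = cauchyMatrix (x ∘ f) (y ∘ g) :=
  rfl

theorem det_cauchyMatrix_succ {m : ℕ} (x y : Fin (m + 1) → K) (hxy : ∀ i j, x i + y j ≠ 0) :
    (cauchyMatrix x y).det =
      (x (Fin.last m) + y (Fin.last m))⁻¹ *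
        (∏ i : Fin m, (x (Fin.last m) - x i.castSucc) / (x i.castSucc + y (Fin.last m))) *
        (∏ j : Fin m, (y (Fin.last m) - y j.castSucc) / (x (Fin.last m) + y j.castSucc)) *
        (cauchyMatrix (x ∘ Fin.castSucc) (y ∘ Fin.castSucc)).det := by
  set C := cauchyMatrix x y
  set c : Fin (m + 1) → K :=
    Fin.lastCases 0 fun i => (x (Fin.last m) + y (Fin.last m)) / (x i.castSucc + y (Fin.last m))
  set B : Matrix (Fin (m + 1)) (Fin (m + 1)) K := of fun i j => C i j - c i * C (Fin.last m) j
  have hBC : C.det = B.det :=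
    det_eq_of_forall_row_eq_smul_add_const c (Fin.last m) (Fin.lastCases_last ..) fun i j => by
      simp only [B, c, of_apply, Fin.lastCases_last, zero_mul, sub_zero, sub_add_cancel]
  have hB_corner : B (Fin.last m) (Fin.last m) = (x (Fin.last m) + y (Fin.last m))⁻¹ := by
    simp only [B, c, C, cauchyMatrix, of_apply, Fin.lastCases_last, zero_mul, sub_zero, one_div]
  have hB_last : ∀ i : Fin m, B i.castSucc (Fin.last m) = 0 := by
    intro i
    have := hxy i.castSucc (Fin.last m)
    have := hxy (Fin.last m) (Fin.last m)
    simp only [B, c, C, cauchyMatrix, one_div, of_apply, Fin.lastCases_castSucc]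
    field_simp
    ring
  have hB_sub : B.submatrix Fin.castSucc Fin.castSucc =
      diagonal (fun i => (x (Fin.last m) - x i.castSucc) / (x i.castSucc + y (Fin.last m))) *
        cauchyMatrix (x ∘ Fin.castSucc) (y ∘ Fin.castSucc) *
        diagonal (fun j => (y (Fin.last m) - y j.castSucc) / (x (Fin.last m) + y j.castSucc)) := by
    ext i j
    have := hxy i.castSucc (Fin.last m)
    have := hxy (Fin.last m) j.castSucc
    have := hxy i.castSucc j.castSucc
    simp only [B, c, C, cauchyMatrix, one_div, of_apply, submatrix_apply, Fin.lastCases_castSucc,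
      Function.comp_apply, mul_diagonal, diagonal_mul]
    field_simp
    ring
  rw [hBC, det_succ_column B (Fin.last m), Fin.sum_univ_castSucc]
  simp only [hB_last, mul_zero, zero_mul, Finset.sum_const_zero, zero_add, Fin.succAbove_last]
  rw [hB_sub, det_mul, det_mul, det_diagonal, det_diagonal, Even.neg_one_pow ⟨_, rfl⟩, hB_corner]
  ring

theorem det_cauchyMatrix_pos [LinearOrder K] [IsStrictOrderedRing K] {m : ℕ} {x y : Fin m → K}
    (hxy : ∀ i j, 0 < x i + y j) (hx : StrictMono x) (hy : StrictMono y) :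
    0 < (cauchyMatrix x y).det := by
  induction m with
  | zero => simp
  | succ m ih =>
    rw [det_cauchyMatrix_succ x y fun i j => (hxy i j).ne']
    have hcorner := inv_pos.2 (hxy (Fin.last m) (Fin.last m))
    have hrows : 0 < ∏ i : Fin m,
        (x (Fin.last m) - x i.castSucc) / (x i.castSucc + y (Fin.last m)) :=
      Finset.prod_pos fun i _ => div_pos (sub_pos.2 (hx i.castSucc_lt_last)) (hxy _ _)
    have hcols : 0 < ∏ j : Fin m,
        (y (Fin.last m) - y j.castSucc) / (x (Fin.last m) + y j.castSucc) :=
      Finset.prod_pos fun j _ => div_pos (sub_pos.2 (hy j.castSucc_lt_last)) (hxy _ _)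
    have hminor := ih (fun _ _ => hxy _ _) (hx.comp Fin.strictMono_castSucc)
      (hy.comp Fin.strictMono_castSucc)
    positivity

theorem neg_one_pow_mul_inv_apply {m : ℕ} (A : Matrix (Fin (m + 1)) (Fin (m + 1)) K)
    (i j : Fin (m + 1)) :
    (-1) ^ ((i : ℕ) + j) * A⁻¹ i j = (A.submatrix j.succAbove i.succAbove).det / A.det := by
  rw [inv_def, Matrix.smul_apply, adjugate_fin_succ_eq_det_submatrix, Ring.inverse_eq_inv',
    smul_eq_mul, add_comm (j : ℕ), mul_left_comm A.det⁻¹, ← mul_assoc, ← pow_add,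
    Even.neg_one_pow ⟨_, rfl⟩, one_mul, div_eq_inv_mul]

theorem neg_one_pow_mul_inv_cauchyMatrix_pos [LinearOrder K] [IsStrictOrderedRing K] {n : ℕ}
    {x y : Fin n → K} (hxy : ∀ i j, 0 < x i + y j) (hx : StrictMono x) (hy : StrictMono y)
    (i j : Fin n) :
    0 < (-1) ^ ((i : ℕ) + j) * (cauchyMatrix x y)⁻¹ i j := by
  cases n with
  | zero => exact i.elim0
  | succ m =>
    rw [neg_one_pow_mul_inv_apply, cauchyMatrix_submatrix]
    exact div_pos
      (det_cauchyMatrix_pos (fun _ _ => hxy _ _) (hx.comp (Fin.strictMono_succAbove j))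
        (hy.comp (Fin.strictMono_succAbove i)))
      (det_cauchyMatrix_pos hxy hx hy)

theorem Psi_inv_checkerboard_general (n : ℕ) (lam : Fin n → ℝ)
    (hpos : ∀ i, 0 < lam i) (hmono : StrictMono lam) :
    IsUnit (Matrix.of fun i j => 1 / (lam i + lam j) : Matrix (Fin n) (Fin n) ℝ).det ∧
      (∀ i j : Fin n,
        0 < (-1 : ℝ) ^ ((i : ℕ) + (j : ℕ)) *
          (Matrix.of fun i j => 1 / (lam i + lam j) : Matrix (Fin n) (Fin n) ℝ)⁻¹ i j) ∧
      ∀ i j : Fin n,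
        0 < (Matrix.diagonal (fun i : Fin n => (-1 : ℝ) ^ (i : ℕ)) *
              (Matrix.of fun i j => 1 / (lam i + lam j) : Matrix (Fin n) (Fin n) ℝ)⁻¹ *
              Matrix.diagonal (fun i : Fin n => (-1 : ℝ) ^ (i : ℕ))) i j := by
  have hsum : ∀ i j, 0 < lam i + lam j := fun i j => add_pos (hpos i) (hpos j)
  have hsign := neg_one_pow_mul_inv_cauchyMatrix_pos hsum hmono hmono
  refine ⟨(det_cauchyMatrix_pos hsum hmono hmono).ne'.isUnit, hsign, fun i j => ?_⟩
  rw [mul_diagonal, diagonal_mul, mul_right_comm, ← pow_add]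
  exact hsign i j

/-- The inverse of the Cauchy matrix `Ψ` (with `Ψᵢⱼ = 1/(λᵢ + λⱼ)`,
`0 < λ₁ < ⋯ < λₙ`) exists and has the checkerboard sign pattern; equivalently,
every entry of `σ* Ψ⁻¹ σ*` is positive, where `σ*` is the diagonal signature
matrix with `i`-th diagonal entry `(-1)^i`. -/
theorem Psi_inv_checkerboard (n : ℕ) (hn : 0 < n) (lam : Fin n → ℝ)
    (hpos : ∀ i, 0 < lam i) (hmono : StrictMono lam) :
    IsUnit (Matrix.of fun i j => 1 / (lam i + lam j) : Matrix (Fin n) (Fin n) ℝ).det ∧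
      (∀ i j : Fin n,
        0 < (-1 : ℝ) ^ ((i : ℕ) + (j : ℕ)) *
          (Matrix.of fun i j => 1 / (lam i + lam j) : Matrix (Fin n) (Fin n) ℝ)⁻¹ i j) ∧
      ∀ i j : Fin n,
        0 < (Matrix.diagonal (fun i : Fin n => (-1 : ℝ) ^ (i : ℕ)) *
              (Matrix.of fun i j => 1 / (lam i + lam j) : Matrix (Fin n) (Fin n) ℝ)⁻¹ *
              Matrix.diagonal (fun i : Fin n => (-1 : ℝ) ^ (i : ℕ))) i j :=
  Psi_inv_checkerboard_general n lam hpos hmono
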